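/- arXiv:1704.00899 — 4 statements merged into one kernel-verified Lean document; each statement's English description precedes it below -/
import Mathlib

section
/- Let G be a bipartite graph and M a maximum matching in G. Then the sets 𝓔, 𝓞, 𝓤 of even, odd, and unreachable vertices with respect to M are pairwise disjoint; that is, every vertex of G receives exactly one of the three labels. -/
/-!
An even and an odd alternating path ending at `v` start at unmatched vertices `u₁`, `u₂` which,
by bipartiteness, lie on opposite sides. Follow the odd path from `u₂` until it first meets the
even path, then return along the even path to `u₁`: the parities at the meeting point make this an
alternating path between two unmatched vertices, and exchanging its edges with those of `M`
yields a larger matching.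
-/

open SimpleGraph

variable {V : Type*}

/-- `M` is a matching in the graph `G`: a set of edges of `G` no two of which
share a vertex. -/
def IsMatchingIn (G : SimpleGraph V) (M : Set (Sym2 V)) : Prop :=
  M ⊆ G.edgeSet ∧ ∀ e ∈ M, ∀ f ∈ M, e ≠ f → ∀ v : V, v ∈ e → v ∉ f

/-- A vertex `v` is matched (covered) by the matching `M`. -/
def IsMatchedBy (M : Set (Sym2 V)) (v : V) : Prop :=
  ∃ e ∈ M, v ∈ e

/-- The list of edges of a path given as a list of vertices. -/
def pathEdges (p : List V) : List (Sym2 V) :=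
  (p.zip p.tail).map fun q => s(q.1, q.2)

/-- `p` is an alternating path from `u` to `v` in `G` with respect to the matching `M`:
its consecutive vertices are adjacent in `G`, it repeats no vertex, and its edges
alternate between edges in `M` and edges not in `M`. -/
def IsAltPath (G : SimpleGraph V) (M : Set (Sym2 V)) (u v : V) (p : List V) : Prop :=
  p.Chain' G.Adj ∧ p.Nodup ∧
    (pathEdges p).Chain' (fun e f => (e ∈ M ↔ f ∉ M)) ∧
    p.head? = some u ∧ p.getLast? = some v

/-- `v` is even with respect to `M`: there is an even-length alternating path from
an `M`-unmatched vertex to `v`. -/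
def EvenVtx (G : SimpleGraph V) (M : Set (Sym2 V)) (v : V) : Prop :=
  ∃ u p, ¬ IsMatchedBy M u ∧ IsAltPath G M u v p ∧ Even (pathEdges p).length

/-- `v` is odd with respect to `M`: there is an odd-length alternating path from
an `M`-unmatched vertex to `v`. -/
def OddVtx (G : SimpleGraph V) (M : Set (Sym2 V)) (v : V) : Prop :=
  ∃ u p, ¬ IsMatchedBy M u ∧ IsAltPath G M u v p ∧ Odd (pathEdges p).length

/-- `v` is unreachable with respect to `M`: there is no alternating path from any
`M`-unmatched vertex to `v`. -/
def UnreachableVtx (G : SimpleGraph V) (M : Set (Sym2 V)) (v : V) : Prop :=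
  ¬ ∃ u p, ¬ IsMatchedBy M u ∧ IsAltPath G M u v p

/-- `M` is a maximum (cardinality) matching in `G`. -/
def IsMaxMatching (G : SimpleGraph V) (M : Set (Sym2 V)) : Prop :=
  IsMatchingIn G M ∧ ∀ N, IsMatchingIn G N → N.ncard ≤ M.ncard

/-- `G` is bipartite with the two sides given by `side`. -/
def IsBipartiteWith (G : SimpleGraph V) (side : V → Bool) : Prop :=
  ∀ u v, G.Adj u v → side u ≠ side v

@[simp] lemma pathEdges_cons_cons (a b : V) (l : List V) :
    pathEdges (a :: b :: l) = s(a, b) :: pathEdges (b :: l) := rfl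

@[simp] lemma length_pathEdges (p : List V) : (pathEdges p).length = p.length - 1 := by
  simp [pathEdges]

@[simp] lemma getElem_pathEdges (p : List V) (k : ℕ) (hk : k < (pathEdges p).length) :
    (pathEdges p)[k] = s(p[k]'(by simp at hk; omega), p[k + 1]'(by simp at hk; omega)) := by
  simp [pathEdges]

lemma mem_of_mem_pathEdges {p : List V} {e : Sym2 V} {w : V} (he : e ∈ pathEdges p)
    (hw : w ∈ e) : w ∈ p := by
  obtain ⟨⟨a, b⟩, hab, rfl⟩ := List.mem_map.1 he
  rcases Sym2.mem_iff.1 hw with rfl | rfl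
  · exact (List.of_mem_zip hab).1
  · exact List.mem_of_mem_tail (List.of_mem_zip hab).2

lemma nodup_pathEdges {p : List V} (hp : p.Nodup) : (pathEdges p).Nodup := by
  induction p with
  | nil => exact List.nodup_nil
  | cons a l ih =>
    cases l with
    | nil => exact List.nodup_nil
    | cons b l =>
      rw [pathEdges_cons_cons, List.nodup_cons]
      exact ⟨fun h => (List.nodup_cons.1 hp).1 (mem_of_mem_pathEdges h (Sym2.mem_mk_left a b)),
        ih hp.of_cons⟩

lemma mem_getElem_pathEdges_iff {p : List V} (hp : p.Nodup) {k t : ℕ}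
    (hk : k < (pathEdges p).length) (ht : t < p.length) :
    p[t] ∈ (pathEdges p)[k] ↔ t = k ∨ t = k + 1 := by
  simp [Sym2.mem_iff, hp.getElem_inj_iff]

lemma mem_edgeSet_of_mem_pathEdges {G : SimpleGraph V} {p : List V} (hp : p.IsChain G.Adj)
    {e : Sym2 V} (he : e ∈ pathEdges p) : e ∈ G.edgeSet := by
  obtain ⟨k, hk, rfl⟩ := List.mem_iff_getElem.1 he
  simpa using hp.getElem k (by simp at hk; omega)

section Alternating

variable {α : Type*} {P : α → Prop} {l : List α}

lemma List.IsChain.iff_odd_of_alternating (hl : l.IsChain (fun a b => P a ↔ ¬ P b))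
    (h0 : ∀ a ∈ l.head?, ¬ P a) (k : ℕ) (hk : k < l.length) : P l[k] ↔ Odd k := by
  induction k with
  | zero => simpa using h0 l[0] (by simp [List.head?_eq_getElem?])
  | succ k ih =>
    have := hl.getElem k hk
    rw [Nat.odd_add_one, ← ih (by omega)]
    tauto

lemma List.isChain_alternating_of_iff_odd (h : ∀ k (hk : k < l.length), P l[k] ↔ Odd k) :
    l.IsChain (fun a b => P a ↔ ¬ P b) :=
  List.isChain_iff_getElem.2 fun k hk => by
    rw [h k (by omega), h (k + 1) hk, Nat.odd_add_one, not_not]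

lemma List.IsChain.countP_not_eq_countP_add_one [DecidablePred P] :
    ∀ {l : List α}, l.IsChain (fun a b => P a ↔ ¬ P b) → (∀ a ∈ l.head?, ¬ P a) →
      (∀ a ∈ l.getLast?, ¬ P a) → l ≠ [] → l.countP (fun a => ¬ P a) = l.countP P + 1
  | [a], _, h0, _, _ => by simp [h0 a rfl]
  | [a, b], hl, h0, hlast, _ => by
    simp at hl h0 hlast; tauto
  | a :: b :: c :: l, hl, h0, hlast, _ => by
    simp only [List.isChain_cons_cons] at hl
    have ha : ¬ P a := h0 a rfl
    have hb : P b := by tauto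
    have hc : ¬ P c := by tauto
    have ih := hl.2.2.countP_not_eq_countP_add_one (by simpa using hc)
      (by simpa using hlast) (List.cons_ne_nil _ _)
    simp only [List.countP_cons (l := b :: c :: l), List.countP_cons (l := c :: l), ih]
    simp [ha, hb]

end Alternating

lemma List.ncard_setOf_mem_and {α : Type*} {l : List α} (hl : l.Nodup) (P : α → Prop)
    [DecidablePred P] : {a | a ∈ l ∧ P a}.ncard = l.countP P := by
  classical
  have : {a | a ∈ l ∧ P a} = ↑(l.filter P).toFinset := by ext; simp
  rw [this, Set.ncard_coe_finset, List.toFinset_card_of_nodup (hl.filter _),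
    List.countP_eq_length_filter]

lemma IsBipartiteWith.side_eq_iff_even {G : SimpleGraph V} {side : V → Bool}
    (hbip : IsBipartiteWith G side) {p : List V} (hp : p.IsChain G.Adj) (i : ℕ)
    (hi : i < p.length) : side p[i] = side p[0] ↔ Even i := by
  induction i with
  | zero => simp
  | succ i ih =>
    have hne := hbip _ _ (hp.getElem i hi)
    rw [Nat.even_add_one, ← ih (by omega)]
    revert hne
    cases side p[i] <;> cases side p[i + 1] <;> cases side p[0] <;> simp

lemma IsBipartiteWith.side_eq_iff {G : SimpleGraph V} {side : V → Bool}
    (hbip : IsBipartiteWith G side) {p : List V} (hp : p.IsChain G.Adj) {i k : ℕ}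
    (hi : i < p.length) (hk : k < p.length) : side p[i] = side p[k] ↔ (Even i ↔ Even k) := by
  rw [← hbip.side_eq_iff_even hp i hi, ← hbip.side_eq_iff_even hp k hk]
  cases side p[i] <;> cases side p[k] <;> cases side p[0] <;> simp

lemma IsMatchingIn.mono {G : SimpleGraph V} {M N : Set (Sym2 V)} (hM : IsMatchingIn G M)
    (hN : N ⊆ M) : IsMatchingIn G N :=
  ⟨hN.trans hM.1, fun e he f hf => hM.2 e (hN he) f (hN hf)⟩

lemma IsMatchingIn.eq_of_mem {G : SimpleGraph V} {M : Set (Sym2 V)} (hM : IsMatchingIn G M)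
    {e f : Sym2 V} (he : e ∈ M) (hf : f ∈ M) {w : V} (hwe : w ∈ e) (hwf : w ∈ f) : e = f := by
  by_contra hef
  exact hM.2 e he f hf hef w hwe hwf

lemma IsMaxMatching.finite {G : SimpleGraph V} {M : Set (Sym2 V)} (hM : IsMaxMatching G M) :
    M.Finite := by
  by_contra hinf
  obtain ⟨e, he⟩ := Set.Infinite.nonempty hinf
  have := hM.2 {e} (hM.1.mono (Set.singleton_subset_iff.2 he))
  rw [Set.ncard_singleton, Set.Infinite.ncard hinf] at this
  omega

lemma not_mem_of_not_isMatchedBy {M : Set (Sym2 V)} {w : V} (hw : ¬ IsMatchedBy M w)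
    {e : Sym2 V} (hwe : w ∈ e) : e ∉ M :=
  fun he => hw ⟨e, he, hwe⟩

namespace IsAltPath

variable {G : SimpleGraph V} {M : Set (Sym2 V)} {u v : V} {p : List V}

lemma length_pos (hp : IsAltPath G M u v p) : 0 < p.length :=
  List.length_pos_iff.2 fun h => by simp [h, IsAltPath] at hp

lemma getElem_zero (hp : IsAltPath G M u v p) : p[0]'hp.length_pos = u := by
  simpa [List.head?_eq_getElem?, hp.length_pos] using hp.2.2.2.1

lemma getElem_length_sub_one (hp : IsAltPath G M u v p) :
    p[p.length - 1]'(by have := hp.length_pos; omega) = v := by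
  simpa [List.getLast?_eq_getElem?, hp.length_pos] using hp.2.2.2.2

lemma two_le_length (hp : IsAltPath G M u v p) (huv : u ≠ v) : 2 ≤ p.length := by
  by_contra h
  have h1 : p.length - 1 = 0 := by omega
  exact huv (hp.getElem_zero.symm.trans (by simp only [h1, ← hp.getElem_length_sub_one]))

lemma mem_of_mem_head? (hp : IsAltPath G M u v p) {e : Sym2 V}
    (he : e ∈ (pathEdges p).head?) : u ∈ e := by
  obtain ⟨hk, rfl⟩ := List.getElem?_eq_some_iff.1 (List.head?_eq_getElem? ▸ he)
  simp [← hp.getElem_zero]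

lemma mem_of_mem_getLast? (hp : IsAltPath G M u v p) {e : Sym2 V}
    (he : e ∈ (pathEdges p).getLast?) : v ∈ e := by
  obtain ⟨hk, rfl⟩ := List.getElem?_eq_some_iff.1 (List.getLast?_eq_getElem? ▸ he)
  simp only [length_pathEdges] at hk
  simp [← hp.getElem_length_sub_one, show p.length - 1 - 1 + 1 = p.length - 1 by omega]

lemma mem_iff_odd (hp : IsAltPath G M u v p) (hu : ¬ IsMatchedBy M u) (k : ℕ)
    (hk : k < (pathEdges p).length) : (pathEdges p)[k] ∈ M ↔ Odd k :=
  hp.2.2.1.iff_odd_of_alternating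
    (fun _ he => not_mem_of_not_isMatchedBy hu (hp.mem_of_mem_head? he)) k hk

lemma mem_or_mem_of_ne (hp : IsAltPath G M u v p) {e f : Sym2 V} (he : e ∈ pathEdges p)
    (hf : f ∈ pathEdges p) (hef : e ≠ f) {w : V} (hwe : w ∈ e) (hwf : w ∈ f) :
    e ∈ M ∨ f ∈ M := by
  obtain ⟨t, ht, rfl⟩ := List.mem_iff_getElem.1 (mem_of_mem_pathEdges he hwe)
  obtain ⟨k, hk, rfl⟩ := List.mem_iff_getElem.1 he
  obtain ⟨l, hl, rfl⟩ := List.mem_iff_getElem.1 hf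
  rw [mem_getElem_pathEdges_iff hp.2.1] at hwe hwf
  have hkl : k ≠ l := fun h => hef (by simp only [h])
  have halt := List.isChain_iff_getElem.1 hp.2.2.1
  obtain rfl | rfl : l = k + 1 ∨ k = l + 1 := by omega
  · have := halt k hl; tauto
  · have := halt l hk; tauto

lemma mem_pathEdges_of_mem (hM : IsMatchingIn G M) (hp : IsAltPath G M u v p)
    (hu : ¬ IsMatchedBy M u) (hv : ¬ IsMatchedBy M v) {e : Sym2 V} (he : e ∈ M) {w : V}
    (hwe : w ∈ e) (hw : w ∈ p) : e ∈ pathEdges p := by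
  obtain ⟨t, ht, rfl⟩ := List.mem_iff_getElem.1 hw
  have ht0 : t ≠ 0 := by
    rintro rfl; exact hu ⟨e, he, hp.getElem_zero ▸ hwe⟩
  have htl : t ≠ p.length - 1 := by
    rintro rfl; exact hv ⟨e, he, hp.getElem_length_sub_one ▸ hwe⟩
  -- `p[t]` is interior, so one of the two path edges at it lies in `M`, and must be `e`.
  have htE : t < (pathEdges p).length := by simp; omega
  have hprev : p[t] ∈ (pathEdges p)[t - 1] :=
    (mem_getElem_pathEdges_iff hp.2.1 _ _).2 (Or.inr (by omega))
  have hnext : p[t] ∈ (pathEdges p)[t] := (mem_getElem_pathEdges_iff hp.2.1 _ _).2 (Or.inl rfl)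
  have halt := List.isChain_iff_getElem.1 hp.2.2.1 (t - 1) (by omega)
  simp only [show t - 1 + 1 = t by omega] at halt
  by_cases hM' : (pathEdges p)[t] ∈ M
  · exact hM.eq_of_mem he hM' hwe hnext ▸ List.getElem_mem _
  · exact hM.eq_of_mem he (halt.2 hM') hwe hprev ▸ List.getElem_mem _

lemma isMatchingIn_symmDiff (hM : IsMatchingIn G M) (hp : IsAltPath G M u v p)
    (hu : ¬ IsMatchedBy M u) (hv : ¬ IsMatchedBy M v) :
    IsMatchingIn G (symmDiff M {e | e ∈ pathEdges p}) := by
  refine ⟨fun e he => ?_, fun e he f hf hef w hwe hwf => ?_⟩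
  · rcases Set.mem_symmDiff.1 he with ⟨he, -⟩ | ⟨he, -⟩
    · exact hM.1 he
    · exact mem_edgeSet_of_mem_pathEdges hp.1 he
  rcases Set.mem_symmDiff.1 he with ⟨heM, heS⟩ | ⟨heS, heM⟩ <;>
    rcases Set.mem_symmDiff.1 hf with ⟨hfM, hfS⟩ | ⟨hfS, hfM⟩
  · exact hM.2 e heM f hfM hef w hwe hwf
  · exact heS (hp.mem_pathEdges_of_mem hM hu hv heM hwe (mem_of_mem_pathEdges hfS hwf))
  · exact hfS (hp.mem_pathEdges_of_mem hM hu hv hfM hwf (mem_of_mem_pathEdges heS hwe))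
  · exact (hp.mem_or_mem_of_ne heS hfS hef hwe hwf).elim heM hfM

lemma ncard_symmDiff (hMfin : M.Finite) (hp : IsAltPath G M u v p)
    (hu : ¬ IsMatchedBy M u) (hv : ¬ IsMatchedBy M v) (huv : u ≠ v) :
    (symmDiff M {e | e ∈ pathEdges p}).ncard = M.ncard + 1 := by
  classical
  set S : Set (Sym2 V) := {e | e ∈ pathEdges p}
  have hSfin : S.Finite := List.finite_toSet _
  have hnd := nodup_pathEdges hp.2.1
  -- the path edges alternate, and both end edges lie outside `M`
  have hcount : (S \ M).ncard = (S ∩ M).ncard + 1 := by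
    rw [show S \ M = {e | e ∈ pathEdges p ∧ e ∉ M} from rfl,
      show S ∩ M = {e | e ∈ pathEdges p ∧ e ∈ M} from rfl,
      List.ncard_setOf_mem_and hnd, List.ncard_setOf_mem_and hnd]
    refine hp.2.2.1.countP_not_eq_countP_add_one
      (fun _ he => not_mem_of_not_isMatchedBy hu (hp.mem_of_mem_head? he))
      (fun _ he => not_mem_of_not_isMatchedBy hv (hp.mem_of_mem_getLast? he)) ?_
    have := hp.two_le_length huv
    exact List.ne_nil_of_length_pos (by simp; omega)
  rw [Set.symmDiff_def, Set.ncard_union_eq disjoint_sdiff_sdiff hMfin.sdiff hSfin.sdiff,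
    hcount, Set.inter_comm, ← Set.ncard_inter_add_ncard_sdiff_eq_ncard M S hMfin]
  ring

end IsAltPath

lemma IsMaxMatching.not_isAltPath {G : SimpleGraph V} {M : Set (Sym2 V)}
    (hM : IsMaxMatching G M) {u v : V} (huv : u ≠ v) (hu : ¬ IsMatchedBy M u)
    (hv : ¬ IsMatchedBy M v) (p : List V) : ¬ IsAltPath G M u v p := fun hp => by
  have := hM.2 _ (hp.isMatchingIn_symmDiff hM.1 hu hv)
  rw [hp.ncard_symmDiff hM.finite hu hv huv] at this
  omega

section SpliceRev

variable {α : Type*} {a b : List α} {i j t : ℕ}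

/-- `a` up to `a[j]`, then `b` backwards from `b[i - 1]` to `b[0]`: when `a[j] = b[i]`, a walk
from `a[0]` to `b[0]` through that common vertex. -/
def List.spliceRev (a b : List α) (j i : ℕ) : List α :=
  a.take (j + 1) ++ (b.take i).reverse

lemma List.length_spliceRev (hj : j < a.length) (hi : i < b.length) :
    (a.spliceRev b j i).length = i + j + 1 := by
  simp [List.spliceRev]; omega

lemma List.getElem_spliceRev_of_le (hj : j < a.length) (htj : t ≤ j)
    (ht : t < (a.spliceRev b j i).length) : (a.spliceRev b j i)[t] = a[t] := by
  simp only [List.spliceRev]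
  rw [List.getElem_append_left (by simp; omega), List.getElem_take]

lemma List.getElem_spliceRev_of_ge (hj : j < a.length) (hi : i < b.length)
    (hab : a[j] = b[i]) (hjt : j ≤ t) (ht : t < (a.spliceRev b j i).length) :
    (a.spliceRev b j i)[t] = b[i + j - t]'(by omega) := by
  rcases hjt.eq_or_lt with rfl | hjt
  · rw [List.getElem_spliceRev_of_le hj le_rfl, hab]
    simp
  · simp only [List.spliceRev]
    rw [List.getElem_append_right (by simp; omega)]
    simp [List.getElem_reverse]
    congr 1
    omega

lemma List.IsChain.spliceRev {R : α → α → Prop} (hR : Std.Symm R) (ha : a.IsChain R)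
    (hb : b.IsChain R) (hj : j < a.length) (hi : i < b.length) (hab : a[j] = b[i]) :
    (a.spliceRev b j i).IsChain R := by
  have hlen := List.length_spliceRev (b := b) hj hi
  refine List.isChain_iff_getElem.2 fun t ht => ?_
  rcases Nat.lt_or_ge t j with htj | htj
  · rw [List.getElem_spliceRev_of_le hj htj.le, List.getElem_spliceRev_of_le hj htj]
    exact ha.getElem t (by omega)
  · rw [List.getElem_spliceRev_of_ge hj hi hab htj,
      List.getElem_spliceRev_of_ge hj hi hab (by omega)]
    have := hb.getElem (i + j - (t + 1)) (by omega)
    simp only [show i + j - (t + 1) + 1 = i + j - t by omega] at this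
    exact hR.symm _ _ this

lemma List.Nodup.spliceRev (ha : a.Nodup) (hb : b.Nodup) (hj : j < a.length)
    (hi : i < b.length) (hab : a[j] = b[i]) (hdisj : ∀ t (ht : t < j), a[t] ∉ b) :
    (a.spliceRev b j i).Nodup := by
  refine List.nodup_append.2 ⟨ha.sublist (List.take_sublist _ _),
    List.nodup_reverse.2 (hb.sublist (List.take_sublist _ _)), ?_⟩
  rintro _ hxa _ hxb rfl
  obtain ⟨t, ht, rfl⟩ := List.mem_take_iff_getElem.1 hxa
  obtain ⟨s, hs, hst⟩ := List.mem_take_iff_getElem.1 (List.mem_reverse.1 hxb)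
  rcases Nat.lt_or_ge t j with htj | htj
  · exact hdisj t htj (hst ▸ List.getElem_mem _)
  · have : b[s] = b[i] := by rw [hst, ← hab]; congr 1; omega
    have := hb.getElem_inj_iff.1 this
    omega

end SpliceRev

namespace IsAltPath

variable {G : SimpleGraph V} {M : Set (Sym2 V)} {u₁ v₁ u₂ v₂ : V} {p₁ p₂ : List V} {i j : ℕ}

lemma spliceRev (hp₁ : IsAltPath G M u₁ v₁ p₁) (hp₂ : IsAltPath G M u₂ v₂ p₂)
    (hu₁ : ¬ IsMatchedBy M u₁) (hu₂ : ¬ IsMatchedBy M u₂) (hi : i < p₁.length)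
    (hj : j < p₂.length) (hx : p₂[j] = p₁[i]) (hij : Odd (i + j))
    (hdisj : ∀ t (ht : t < j), p₂[t] ∉ p₁) : IsAltPath G M u₂ u₁ (p₂.spliceRev p₁ j i) := by
  set q := p₂.spliceRev p₁ j i
  have hq : q.length = i + j + 1 := List.length_spliceRev hj hi
  have hleft : ∀ t (htj : t ≤ j) (ht : t < q.length), q[t] = p₂[t] :=
    fun t htj ht => List.getElem_spliceRev_of_le hj htj ht
  have hright : ∀ t (hjt : j ≤ t) (ht : t < q.length), q[t] = p₁[i + j - t]'(by omega) :=
    fun t hjt ht => List.getElem_spliceRev_of_ge hj hi hx hjt ht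
  refine ⟨hp₂.1.spliceRev G.symm hp₁.1 hj hi hx, hp₂.2.1.spliceRev hp₁.2.1 hj hi hx hdisj,
    ?_, ?_, ?_⟩
  · refine List.isChain_alternating_of_iff_odd fun k hk => ?_
    simp only [length_pathEdges, hq] at hk
    rw [getElem_pathEdges]
    rcases Nat.lt_or_ge k j with hkj | hkj
    · rw [hleft k hkj.le, hleft (k + 1) hkj, ← getElem_pathEdges p₂ k (by simp; omega)]
      exact hp₂.mem_iff_odd hu₂ k _
    · -- past the junction, edge `k` of `q` is edge `i + j - (k + 1)` of `p₁`, whose parity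
      -- agrees with that of `k` because `i + j` is odd
      rw [hright k hkj, hright (k + 1) (by omega), Sym2.eq_swap]
      simp only [show i + j - k = i + j - (k + 1) + 1 by omega]
      rw [← getElem_pathEdges p₁ _ (by simp; omega), hp₁.mem_iff_odd hu₁]
      simp only [Nat.odd_iff] at hij ⊢
      omega
  · rw [List.head?_eq_getElem?, List.getElem?_eq_getElem (by omega), hleft 0 (by omega),
      hp₂.getElem_zero]
  · rw [List.getLast?_eq_getElem?, List.getElem?_eq_getElem (by omega),
      hright _ (by omega)]
    simp only [hq, show i + j - (i + j + 1 - 1) = 0 by omega, hp₁.getElem_zero]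

end IsAltPath

lemma not_evenVtx_and_oddVtx {G : SimpleGraph V} {side : V → Bool}
    (hbip : IsBipartiteWith G side) {M : Set (Sym2 V)} (hM : IsMaxMatching G M) {v : V}
    (heven : EvenVtx G M v) (hodd : OddVtx G M v) : False := by
  classical
  obtain ⟨u₁, p₁, hu₁, hp₁, hn₁⟩ := heven
  obtain ⟨u₂, p₂, hu₂, hp₂, hn₂⟩ := hodd
  rw [length_pathEdges] at hn₁ hn₂
  have hside₁ : ∀ k (hk : k < p₁.length), side p₁[k] = side v ↔ Even k := fun k hk => by
    rw [← hp₁.getElem_length_sub_one, hbip.side_eq_iff hp₁.1 hk (by omega)]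
    simp [hn₁]
  have hside₂ : ∀ k (hk : k < p₂.length), side p₂[k] = side v ↔ ¬ Even k := fun k hk => by
    rw [← hp₂.getElem_length_sub_one, hbip.side_eq_iff hp₂.1 hk (by omega)]
    simp [Nat.not_even_iff_odd.2 hn₂]
  have hu : u₂ ≠ u₁ := fun h => by
    have h₁ := (hside₁ 0 hp₁.length_pos).2 (by simp)
    have h₂ := hside₂ 0 hp₂.length_pos
    rw [hp₁.getElem_zero] at h₁
    rw [hp₂.getElem_zero, h] at h₂
    simp [h₁] at h₂
  have hex : ∃ t, ∃ _ : t < p₂.length, p₂[t] ∈ p₁ := by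
    refine ⟨p₂.length - 1, by have := hp₂.length_pos; omega, ?_⟩
    rw [hp₂.getElem_length_sub_one, ← hp₁.getElem_length_sub_one]
    exact List.getElem_mem _
  set j := Nat.find hex
  obtain ⟨hj, hjp₁⟩ := Nat.find_spec hex
  obtain ⟨i, hi, hx⟩ := List.mem_iff_getElem.1 hjp₁
  have hdisj : ∀ t (ht : t < j), p₂[t] ∉ p₁ := fun t ht hmem => Nat.find_min hex ht ⟨_, hmem⟩
  have hij : Odd (i + j) := by
    have := (hside₁ i hi).symm.trans (hx ▸ hside₂ j hj)
    rw [Nat.odd_add, ← Nat.not_even_iff_odd]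
    tauto
  exact hM.not_isAltPath hu hu₂ hu₁ _ (hp₁.spliceRev hp₂ hu₁ hu₂ hi hj hx.symm hij hdisj)

theorem even_odd_unreachable_partition_general
    (G : SimpleGraph V) (side : V → Bool) (hbip : IsBipartiteWith G side)
    (M : Set (Sym2 V)) (hM : IsMaxMatching G M) (v : V) :
    (EvenVtx G M v ∧ ¬ OddVtx G M v ∧ ¬ UnreachableVtx G M v) ∨
    (¬ EvenVtx G M v ∧ OddVtx G M v ∧ ¬ UnreachableVtx G M v) ∨
    (¬ EvenVtx G M v ∧ ¬ OddVtx G M v ∧ UnreachableVtx G M v) := by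
  have hexcl := not_evenVtx_and_oddVtx hbip hM (v := v)
  have heven : EvenVtx G M v → ¬ UnreachableVtx G M v :=
    fun ⟨u, p, hu, hp, _⟩ hU => hU ⟨u, p, hu, hp⟩
  have hodd : OddVtx G M v → ¬ UnreachableVtx G M v :=
    fun ⟨u, p, hu, hp, _⟩ hU => hU ⟨u, p, hu, hp⟩
  have hreach : ¬ UnreachableVtx G M v → EvenVtx G M v ∨ OddVtx G M v := by
    rw [UnreachableVtx, not_not]
    rintro ⟨u, p, hu, hp⟩
    exact (Nat.even_or_odd _).imp (fun h => ⟨u, p, hu, hp, h⟩) (fun h => ⟨u, p, hu, hp, h⟩)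
  tauto

/-- For a maximum matching `M` in a bipartite graph `G`, the sets of
even, odd and unreachable vertices are pairwise disjoint: every vertex receives
exactly one of the three labels. -/
theorem even_odd_unreachable_partition [Fintype V]
    (G : SimpleGraph V) (side : V → Bool) (hbip : IsBipartiteWith G side)
    (M : Set (Sym2 V)) (hM : IsMaxMatching G M) (v : V) :
    (EvenVtx G M v ∧ ¬ OddVtx G M v ∧ ¬ UnreachableVtx G M v) ∨
    (¬ EvenVtx G M v ∧ OddVtx G M v ∧ ¬ UnreachableVtx G M v) ∨
    (¬ EvenVtx G M v ∧ ¬ OddVtx G M v ∧ UnreachableVtx G M v) :=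
  even_odd_unreachable_partition_general G side hbip M hM v
end

section
/- Let G be an instance of the rank-maximal matching problem with ranks in {1, …, r}, and for 1 ≤ i ≤ r let G_i denote the subinstance of G containing exactly the edges of rank at most i (with their ranks). If M is a rank-maximal matching of G and M_i := M ∩ (E_1 ∪ … ∪ E_i) is the set of edges of M of rank at most i, then M_i is a rank-maximal matching of G_i; in particular, if ρ(M) = (s_1, …, s_r), then the rank-maximal signature of G_i is (s_1, …, s_i). -/
open SimpleGraph

variable {V : Type*}

/-- The signature of a matching: `signature rank M i` is the number of edges of
rank `i` in `M`. -/
noncomputable def signature (rank : Sym2 V → ℕ) (M : Set (Sym2 V)) (i : ℕ) : ℕ :=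
  {e ∈ M | rank e = i}.ncard

/-- Lexicographic comparison of signatures on coordinates `1, …, r`:
`SigGt r x y` means `x ≻ y`. -/
def SigGt (r : ℕ) (x y : ℕ → ℕ) : Prop :=
  ∃ k, 1 ≤ k ∧ k ≤ r ∧ (∀ j, 1 ≤ j → j < k → x j = y j) ∧ y k < x k

/-- `M` is a rank-maximal matching of the instance `(G, rank)` with ranks in
`{1, …, r}`: no matching of `G` has a lexicographically greater signature. -/
def IsRankMaximal (G : SimpleGraph V) (rank : Sym2 V → ℕ) (r : ℕ)
    (M : Set (Sym2 V)) : Prop :=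
  IsMatchingIn G M ∧
    ∀ N, IsMatchingIn G N → ¬ SigGt r (signature rank N) (signature rank M)

/-- All edges of `G` carry a rank in `{1, …, r}`. -/
def RanksBounded (G : SimpleGraph V) (rank : Sym2 V → ℕ) (r : ℕ) : Prop :=
  ∀ e ∈ G.edgeSet, 1 ≤ rank e ∧ rank e ≤ r

/-- If `M` is a rank-maximal matching of `G` then, for each `i`, the
set `Mᵢ` of edges of `M` of rank at most `i` is a rank-maximal matching of the
subinstance `Gᵢ` consisting of the edges of `G` of rank at most `i`; in
particular the rank-maximal signature of `Gᵢ` is `(s₁, …, sᵢ)` where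
`(s₁, …, s_r)` is the signature of `M`. -/
theorem truncation_is_rankMaximal [Fintype V]
    (G : SimpleGraph V) (side : V → Bool) (hbip : IsBipartiteWith G side)
    (rank : Sym2 V → ℕ) (r : ℕ) (hr : RanksBounded G rank r)
    (M : Set (Sym2 V)) (hM : IsRankMaximal G rank r M)
    (i : ℕ) (hi1 : 1 ≤ i) (hir : i ≤ r) :
    IsRankMaximal (SimpleGraph.fromEdgeSet {e ∈ G.edgeSet | rank e ≤ i}) rank i
        {e ∈ M | rank e ≤ i} ∧
      ∀ k, 1 ≤ k → k ≤ i →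
        signature rank {e ∈ M | rank e ≤ i} k = signature rank M k := by
  obtain ⟨⟨hMsub, hMdisj⟩, hMmax⟩ := hM
  -- signatures agree at indices ≤ i
  have hsig : ∀ k, k ≤ i → signature rank {e ∈ M | rank e ≤ i} k = signature rank M k := by
    intro k hk
    unfold signature
    congr 1
    ext e
    simp only [Set.mem_setOf_eq]
    constructor
    · rintro ⟨⟨h1, _⟩, h2⟩; exact ⟨h1, h2⟩
    · rintro ⟨h1, h2⟩; exact ⟨⟨h1, h2 ▸ hk⟩, h2⟩
  refine ⟨⟨⟨?_, ?_⟩, ?_⟩, fun k _ hk => hsig k hk⟩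
  · -- Mᵢ is a set of edges of Gᵢ
    rintro e ⟨heM, hei⟩
    have heG : e ∈ G.edgeSet := hMsub heM
    rw [SimpleGraph.edgeSet_fromEdgeSet]
    exact ⟨⟨heG, hei⟩, SimpleGraph.not_isDiag_of_mem_edgeSet G heG⟩
  · -- disjointness inherited
    rintro e ⟨heM, _⟩ f ⟨hfM, _⟩ hef v hv
    exact hMdisj e heM f hfM hef v hv
  · -- rank-maximality
    rintro N ⟨hNsub, hNdisj⟩ ⟨k, hk1, hki, heq, hlt⟩
    -- N is a matching in G
    have hNG : IsMatchingIn G N := by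
      refine ⟨fun e he => ?_, hNdisj⟩
      have := hNsub he
      rw [SimpleGraph.edgeSet_fromEdgeSet] at this
      exact this.1.1
    refine hMmax N hNG ⟨k, hk1, hki.trans hir, ?_, ?_⟩
    · intro j hj1 hjk
      rw [heq j hj1 hjk, hsig j (le_of_lt (lt_of_lt_of_le hjk hki))]
    · rwa [hsig k hki] at hlt
end

section
/- Let M and M' be matchings in a graph G with edges carrying ranks in {1, …, r}, and let C be the edge set of a connected component of the subgraph formed by the symmetric difference M ⊕ M'. Then (M \ C) ∪ (M' ∩ C) is a matching of G, and for each rank k its number of rank-k edges equals x_k − m_k + m'_k, where x_k is the number of rank-k edges of M, m_k is the number of rank-k edges of M ∩ C, and m'_k is the number of rank-k edges of M' ∩ C. -/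
open SimpleGraph

variable {V : Type*}

/-- The set of edges of `D` lying in the connected component `K` of the subgraph
formed by the edge set `D`. -/
def compEdges (D : Set (Sym2 V))
    (K : (SimpleGraph.fromEdgeSet D).ConnectedComponent) : Set (Sym2 V) :=
  {e ∈ D | ∀ v ∈ e, (SimpleGraph.fromEdgeSet D).connectedComponentMk v = K}


/-- Key incidence lemma: an `M`-edge outside the component `C` cannot share a
vertex with an `M' ∩ C`-edge. -/
lemma swap_key (G : SimpleGraph V) (M M' : Set (Sym2 V))
    (hMG : M ⊆ G.edgeSet) (hM' : IsMatchingIn G M')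
    (K : (SimpleGraph.fromEdgeSet (symmDiff M M')).ConnectedComponent)
    {e f : Sym2 V} (he : e ∈ M) (heC : e ∉ compEdges (symmDiff M M') K)
    (hf : f ∈ M' ∩ compEdges (symmDiff M M') K) {v : V} (hv : v ∈ e)
    (hvf : v ∈ f) : False := by
  obtain ⟨hfM', hfD, hfK⟩ := hf
  by_cases heM' : e ∈ M'
  · by_cases hef : e = f
    · subst hef; exact heC ⟨hfD, hfK⟩
    · exact hM'.2 e heM' f hfM' hef v hv hvf
  · have heD : e ∈ symmDiff M M' := by
      rw [Set.mem_symmDiff]; exact Or.inl ⟨he, heM'⟩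
    apply heC
    refine ⟨heD, ?_⟩
    intro w hw
    induction e using Sym2.ind with
    | _ a b =>
      have hab : a ≠ b := (G.mem_edgeSet.mp (hMG he)).ne
      have hadj : (SimpleGraph.fromEdgeSet (symmDiff M M')).Adj a b := by
        rw [SimpleGraph.fromEdgeSet_adj]; exact ⟨heD, hab⟩
      have hvK : (SimpleGraph.fromEdgeSet (symmDiff M M')).connectedComponentMk v = K :=
        hfK v hvf
      have hreach : (SimpleGraph.fromEdgeSet (symmDiff M M')).connectedComponentMk a =
          (SimpleGraph.fromEdgeSet (symmDiff M M')).connectedComponentMk b :=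
        SimpleGraph.ConnectedComponent.sound hadj.reachable
      rcases Sym2.mem_iff.mp hw with rfl | rfl <;>
        rcases Sym2.mem_iff.mp hv with rfl | rfl <;>
        simp_all

/-- If `M, M'` are matchings of a graph `G` with ranked edges and `C`
is the edge set of a connected component of the subgraph formed by `M ⊕ M'`, then
`(M \ C) ∪ (M' ∩ C)` is a matching of `G` whose number of rank-`k` edges is
`x_k - m_k + m'_k`, where `x_k, m_k, m'_k` count the rank-`k` edges of `M`,
`M ∩ C` and `M' ∩ C` respectively. -/
theorem swap_component_is_matching [Fintype V]
    (G : SimpleGraph V) (rank : Sym2 V → ℕ) (r : ℕ) (hr : RanksBounded G rank r)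
    (M M' : Set (Sym2 V)) (hM : IsMatchingIn G M) (hM' : IsMatchingIn G M')
    (K : (SimpleGraph.fromEdgeSet (symmDiff M M')).ConnectedComponent) :
    IsMatchingIn G ((M \ compEdges (symmDiff M M') K) ∪ (M' ∩ compEdges (symmDiff M M') K)) ∧
      ∀ k, signature rank ((M \ compEdges (symmDiff M M') K) ∪ (M' ∩ compEdges (symmDiff M M') K)) k
          = signature rank M k - signature rank (M ∩ compEdges (symmDiff M M') K) k
              + signature rank (M' ∩ compEdges (symmDiff M M') K) k := by
  set C := compEdges (symmDiff M M') K with hC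
  constructor
  · constructor
    · rintro e (⟨heM, -⟩ | ⟨heM', -⟩)
      · exact hM.1 heM
      · exact hM'.1 heM'
    · rintro e (⟨heM, heC⟩ | heC) f (⟨hfM, hfC⟩ | hfC) hef v hv hvf
      · exact hM.2 e heM f hfM hef v hv hvf
      · exact swap_key G M M' hM.1 hM' K heM heC hfC hv hvf
      · exact swap_key G M M' hM.1 hM' K hfM hfC heC hvf hv
      · exact hM'.2 e heC.1 f hfC.1 hef v hv hvf
  · intro k
    have hsplit : {e ∈ (M \ C) ∪ (M' ∩ C) | rank e = k} =
        {e ∈ M \ C | rank e = k} ∪ {e ∈ M' ∩ C | rank e = k} := by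
      ext e; simp only [Set.mem_setOf_eq, Set.mem_union]; tauto
    have hdisj : Disjoint {e ∈ M \ C | rank e = k} {e ∈ M' ∩ C | rank e = k} := by
      rw [Set.disjoint_left]
      rintro e ⟨⟨-, heC⟩, -⟩ ⟨⟨-, heC'⟩, -⟩
      exact heC heC'
    have hdiff : {e ∈ M \ C | rank e = k} =
        {e ∈ M | rank e = k} \ {e ∈ M ∩ C | rank e = k} := by
      ext e; simp only [Set.mem_setOf_eq, Set.mem_diff, Set.mem_inter_iff]; tauto
    have hsub : {e ∈ M ∩ C | rank e = k} ⊆ {e ∈ M | rank e = k} := by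
      rintro e ⟨⟨heM, -⟩, hk⟩; exact ⟨heM, hk⟩
    simp only [signature, hsplit]
    rw [Set.ncard_union_eq hdisj (Set.toFinite _) (Set.toFinite _), hdiff,
      Set.ncard_diff hsub]
end

section
/- Let M and M' be two rank-maximal matchings of the same instance G. Then for every connected component C of the subgraph formed by the symmetric difference M ⊕ M', and for every rank k, the number of rank-k edges of M contained in C equals the number of rank-k edges of M' contained in C. -/
open SimpleGraph

variable {V : Type*}

lemma mem_compEdges_of {D : Set (Sym2 V)}
    {K : (SimpleGraph.fromEdgeSet D).ConnectedComponent}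
    {e : Sym2 V} (he : e ∈ D) (hd : ¬ e.IsDiag) {v : V} (hv : v ∈ e)
    (hK : (SimpleGraph.fromEdgeSet D).connectedComponentMk v = K) :
    e ∈ compEdges D K := by
  refine ⟨he, fun w hw => ?_⟩
  obtain ⟨u, rfl⟩ : ∃ u, e = s(v, u) := ⟨Sym2.Mem.other hv, (Sym2.other_spec hv).symm⟩
  have hvu : v ≠ u := by simpa [Sym2.mk_isDiag_iff] using hd
  have hadj : (SimpleGraph.fromEdgeSet D).Adj v u := by
    rw [SimpleGraph.fromEdgeSet_adj]; exact ⟨he, hvu⟩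
  rcases Sym2.mem_iff.mp hw with rfl | rfl
  · exact hK
  · exact (SimpleGraph.ConnectedComponent.sound hadj.reachable).symm.trans hK

lemma swap_isMatching (G : SimpleGraph V) {M M' D : Set (Sym2 V)}
    (hM : IsMatchingIn G M) (hM' : IsMatchingIn G M')
    (hD : ∀ e, e ∈ M → e ∉ M' → e ∈ D)
    (K : (SimpleGraph.fromEdgeSet D).ConnectedComponent) :
    IsMatchingIn G ((M \ compEdges D K) ∪ (M' ∩ compEdges D K)) := by
  set C := compEdges D K with hC
  constructor
  · rintro e (⟨heM, -⟩ | ⟨heM', -⟩)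
    exacts [hM.1 heM, hM'.1 heM']
  · have key : ∀ g ∈ M \ C, ∀ h ∈ M' ∩ C, g ≠ h → ∀ x, x ∈ g → x ∈ h → False := by
      rintro g ⟨hgM, hgC⟩ h ⟨hhM', hhC⟩ hgh x hxg hxh
      by_cases hgM' : g ∈ M'
      · exact hM'.2 g hgM' h hhM' hgh x hxg hxh
      · apply hgC
        have hK : (SimpleGraph.fromEdgeSet D).connectedComponentMk x = K := hhC.2 x hxh
        exact mem_compEdges_of (hD g hgM hgM')
          (G.not_isDiag_of_mem_edgeSet (hM.1 hgM)) hxg hK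
    rintro e he f hf hef v hve hvf
    rcases he with he | he <;> rcases hf with hf | hf
    · exact hM.2 e he.1 f hf.1 hef v hve hvf
    · exact key e he f hf hef v hve hvf
    · exact key f hf e he hef.symm v hvf hve
    · exact hM'.2 e he.1 f hf.1 hef v hve hvf

lemma sig_union_of_disjoint [Finite V] (rank : Sym2 V → ℕ) {A B : Set (Sym2 V)}
    (h : Disjoint A B) (i : ℕ) :
    signature rank (A ∪ B) i = signature rank A i + signature rank B i := by
  unfold signature
  rw [show {e ∈ A ∪ B | rank e = i} = {e ∈ A | rank e = i} ∪ {e ∈ B | rank e = i} by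
    ext e; simp only [Set.mem_union, Set.mem_sep_iff, Set.mem_setOf_eq]; tauto]
  exact Set.ncard_union_eq (h.mono (Set.sep_subset _ _) (Set.sep_subset _ _))
    (Set.toFinite _) (Set.toFinite _)

/-- If `M, M'` are rank-maximal matchings of the same instance, then
every connected component of the subgraph formed by `M ⊕ M'` contains equally
many rank-`k` edges of `M` and of `M'`, for every rank `k`. -/
theorem rankMaximal_component_signatures_equal [Fintype V]
    (G : SimpleGraph V) (side : V → Bool) (hbip : IsBipartiteWith G side)
    (rank : Sym2 V → ℕ) (r : ℕ) (hr : RanksBounded G rank r)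
    (M M' : Set (Sym2 V))
    (hM : IsRankMaximal G rank r M) (hM' : IsRankMaximal G rank r M')
    (K : (SimpleGraph.fromEdgeSet (symmDiff M M')).ConnectedComponent) :
    ∀ k, signature rank (M ∩ compEdges (symmDiff M M') K) k
        = signature rank (M' ∩ compEdges (symmDiff M M') K) k := by
  classical
  set C := compEdges (symmDiff M M') K with hCdef
  by_contra hcon
  push_neg at hcon
  have hex : ∃ k, signature rank (M ∩ C) k ≠ signature rank (M' ∩ C) k := hcon
  set k₀ := Nat.find hex with hk₀def
  have hk₀ : signature rank (M ∩ C) k₀ ≠ signature rank (M' ∩ C) k₀ := Nat.find_spec hex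
  have hmin : ∀ j < k₀, signature rank (M ∩ C) j = signature rank (M' ∩ C) j := by
    intro j hj
    by_contra hne
    exact absurd (Nat.find_le hne) (not_le.mpr hj)
  -- bound on k₀
  have hboundaux : ∀ (A : Set (Sym2 V)), A ⊆ G.edgeSet →
      signature rank A k₀ ≠ 0 → 1 ≤ k₀ ∧ k₀ ≤ r := by
    intro A hA h0
    obtain ⟨e, he⟩ := Set.nonempty_of_ncard_ne_zero h0
    exact he.2 ▸ hr e (hA he.1)
  have hb : 1 ≤ k₀ ∧ k₀ ≤ r := by
    rcases eq_or_ne (signature rank (M ∩ C) k₀) 0 with h0 | h0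
    · exact hboundaux (M' ∩ C) (fun e he => hM'.1.1 he.1) (by omega)
    · exact hboundaux (M ∩ C) (fun e he => hM.1.1 he.1) h0
  have hDmem : ∀ e, e ∈ M → e ∉ M' → e ∈ symmDiff M M' := fun e h1 h2 =>
    Set.mem_symmDiff.mpr (Or.inl ⟨h1, h2⟩)
  have hDmem' : ∀ e, e ∈ M' → e ∉ M → e ∈ symmDiff M M' := fun e h1 h2 =>
    Set.mem_symmDiff.mpr (Or.inr ⟨h1, h2⟩)
  have hdisj : ∀ (A B : Set (Sym2 V)), Disjoint (A \ C) (B ∩ C) :=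
    fun A B => Set.disjoint_left.mpr fun e he he' => he.2 he'.2
  have hMdecomp : ∀ j, signature rank M j
      = signature rank (M \ C) j + signature rank (M ∩ C) j := by
    intro j
    conv_lhs => rw [← Set.diff_union_inter M C]
    exact sig_union_of_disjoint rank (hdisj M M) j
  have hM'decomp : ∀ j, signature rank M' j
      = signature rank (M' \ C) j + signature rank (M' ∩ C) j := by
    intro j
    conv_lhs => rw [← Set.diff_union_inter M' C]
    exact sig_union_of_disjoint rank (hdisj M' M') j
  rcases lt_or_gt_of_ne hk₀ with hlt | hlt
  · -- N = (M \ C) ∪ (M' ∩ C) beats M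
    set N := (M \ C) ∪ (M' ∩ C) with hNdef
    have hNmatch : IsMatchingIn G N := swap_isMatching G hM.1 hM'.1 hDmem K
    have hNsig : ∀ j, signature rank N j
        = signature rank (M \ C) j + signature rank (M' ∩ C) j :=
      fun j => sig_union_of_disjoint rank (hdisj M M') j
    refine hM.2 N hNmatch ⟨k₀, hb.1, hb.2, fun j _ hj => ?_, ?_⟩
    · rw [hNsig j, hMdecomp j, hmin j hj]
    · rw [hNsig k₀, hMdecomp k₀]; omega
  · -- N' = (M' \ C) ∪ (M ∩ C) beats M'
    set N := (M' \ C) ∪ (M ∩ C) with hNdef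
    have hNmatch : IsMatchingIn G N := swap_isMatching G hM'.1 hM.1 hDmem' K
    have hNsig : ∀ j, signature rank N j
        = signature rank (M' \ C) j + signature rank (M ∩ C) j :=
      fun j => sig_union_of_disjoint rank (hdisj M' M) j
    refine hM'.2 N hNmatch ⟨k₀, hb.1, hb.2, fun j _ hj => ?_, ?_⟩
    · rw [hNsig j, hM'decomp j, hmin j hj]
    · rw [hNsig k₀, hM'decomp k₀]; omega
end
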